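/- arXiv:1202.0514 — 2 statements merged into one kernel-verified Lean document; each statement's English description precedes it below -/
import Mathlib

section
/- For the bivariate Smith model with parameter a > 0, the Pickands dependence function A(w_1,w_2) = w_1·Φ(a/2 + (1/a)log(w_1/w_2)) + w_2·Φ(a/2 + (1/a)log(w_2/w_1)) on the simplex {(w_1,w_2) : w_1,w_2 ≥ 0, w_1+w_2 = 1} satisfies the Pickands bounds max(w_1,w_2) ≤ A(w_1,w_2) ≤ 1 for all w_1,w_2 ∈ (0,1) with w_1 + w_2 = 1, and A(1,0) = A(0,1) = 1 (in the limiting sense). -/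
/-!
Write `c = log (u / v) / a`, so that `A(u, v) = u Φ(a/2 + c) + v Φ(a/2 - c)` and `e^{ac} = u / v`.
Since `Φ ≤ 1`, `A(u, v) ≤ u + v`. For `u ≤ A(u, v)` it suffices, by `1 - Φ(x) = Φ(-x)`, that
`e^{ac} Φ(-a/2 - c) ≤ Φ(a/2 - c)`; after the shift `t = s - a` this is the pointwise bound
`e^{ac - (s - a)²/2} ≤ e^{-s²/2}` for `s ≤ a/2 - c`, i.e. `a (s + c - a/2) ≤ 0`.
The limits at the vertices of the simplex follow by squeezing `A` between `max(w, 1 - w)`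
and `1`.
-/

open Filter

/-- The standard normal cumulative distribution function. -/
noncomputable def Phi (x : ℝ) : ℝ :=
  (Real.sqrt (2 * Real.pi))⁻¹ * ∫ t in Set.Iic x, Real.exp (-t ^ 2 / 2)

/-- The Pickands dependence function of the bivariate Smith model with parameter `a`. -/
noncomputable def smithPickands (a w₁ w₂ : ℝ) : ℝ :=
  w₁ * Phi (a / 2 + (1 / a) * Real.log (w₁ / w₂)) +
    w₂ * Phi (a / 2 + (1 / a) * Real.log (w₂ / w₁))

open MeasureTheory Set Real Topology

lemma integrable_exp_neg_sq_div_two : Integrable (fun t : ℝ => exp (-t ^ 2 / 2)) := by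
  simpa [div_eq_inv_mul, neg_mul] using integrable_exp_neg_mul_sq (by norm_num : (0:ℝ) < 1 / 2)

lemma integral_exp_neg_sq_div_two : ∫ t : ℝ, exp (-t ^ 2 / 2) = √(2 * π) := by
  have h := integral_gaussian (1 / 2)
  rw [show π / (1 / 2) = 2 * π by ring] at h
  simpa [div_eq_inv_mul, neg_mul] using h

lemma Phi_nonneg (x : ℝ) : 0 ≤ Phi x :=
  mul_nonneg (by positivity) (setIntegral_nonneg measurableSet_Iic fun t _ => (exp_pos _).le)

lemma Phi_le_one (x : ℝ) : Phi x ≤ 1 := by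
  rw [Phi, inv_mul_le_iff₀ (by positivity), mul_one, ← integral_exp_neg_sq_div_two]
  exact setIntegral_le_integral integrable_exp_neg_sq_div_two
    (Eventually.of_forall fun t => (exp_pos _).le)

lemma Phi_add_Phi_neg (x : ℝ) : Phi x + Phi (-x) = 1 := by
  have hreflect : ∫ t in Iic (-x), exp (-t ^ 2 / 2) = ∫ t in Ioi x, exp (-t ^ 2 / 2) := by
    have h := integral_comp_neg_Iic (-x) fun t => exp (-t ^ 2 / 2)
    simp only [neg_sq, neg_neg] at h
    exact h
  have hsplit :
      (∫ t in Iic x, exp (-t ^ 2 / 2)) + ∫ t in Ioi x, exp (-t ^ 2 / 2) = √(2 * π) := by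
    rw [← integral_exp_neg_sq_div_two, ← setIntegral_union (Iic_disjoint_Ioi le_rfl)
      measurableSet_Ioi integrable_exp_neg_sq_div_two.integrableOn
      integrable_exp_neg_sq_div_two.integrableOn, Iic_union_Ioi, setIntegral_univ]
  rw [Phi, Phi, hreflect, ← mul_add, hsplit, inv_mul_cancel₀ (by positivity)]

lemma setIntegral_Iic_comp_add_right {E : Type*} [NormedAddCommGroup E] [NormedSpace ℝ E]
    (f : ℝ → E) (b d : ℝ) : ∫ x in Iic b, f (x + d) = ∫ x in Iic (b + d), f x := by
  simpa using (measurePreserving_add_right volume d).setIntegral_preimage_emb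
    (measurableEmbedding_addRight d) f (Iic (b + d))

lemma exp_mul_mul_Phi_neg_sub_le {a : ℝ} (ha : 0 ≤ a) (c : ℝ) :
    exp (a * c) * Phi (-(a / 2) - c) ≤ Phi (a / 2 - c) := by
  have hshift : ∫ t in Iic (-(a / 2) - c), exp (-t ^ 2 / 2)
      = ∫ s in Iic (a / 2 - c), exp (-(s + -a) ^ 2 / 2) := by
    rw [setIntegral_Iic_comp_add_right (fun t => exp (-t ^ 2 / 2))]
    ring_nf
  rw [Phi, Phi, mul_left_comm, hshift, ← integral_const_mul]
  refine mul_le_mul_of_nonneg_left (setIntegral_mono_on ?_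
    integrable_exp_neg_sq_div_two.integrableOn measurableSet_Iic fun s hs => ?_) (by positivity)
  · exact ((integrable_exp_neg_sq_div_two.comp_add_right (-a)).const_mul _).integrableOn
  · rw [← exp_add, exp_le_exp]
    have hs : s ≤ a / 2 - c := hs
    nlinarith

lemma smithPickands_comm (a u v : ℝ) : smithPickands a u v = smithPickands a v u := by
  unfold smithPickands
  ring

lemma smithPickands_le_add (a : ℝ) {u v : ℝ} (hu : 0 ≤ u) (hv : 0 ≤ v) :
    smithPickands a u v ≤ u + v :=
  add_le_add (mul_le_of_le_one_right hu (Phi_le_one _)) (mul_le_of_le_one_right hv (Phi_le_one _))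

lemma le_smithPickands {a u v : ℝ} (ha : 0 < a) (hu : 0 < u) (hv : 0 < v) :
    u ≤ smithPickands a u v := by
  set c := 1 / a * log (u / v) with hc
  have hexp : exp (a * c) = u / v := by
    rw [hc, ← mul_assoc, mul_one_div_cancel ha.ne', one_mul, exp_log (div_pos hu hv)]
  have hlog : 1 / a * log (v / u) = -c := by
    rw [hc, ← inv_div u v, log_inv, mul_neg]
  have hkey : u * Phi (-(a / 2 + c)) ≤ v * Phi (a / 2 - c) := by
    have h := mul_le_mul_of_nonneg_left (exp_mul_mul_Phi_neg_sub_le ha.le c) hv.le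
    rwa [hexp, ← mul_assoc, mul_div_cancel₀ _ hv.ne', ← neg_add'] at h
  have hsum := Phi_add_Phi_neg (a / 2 + c)
  rw [smithPickands, hlog, ← sub_eq_add_neg]
  nlinarith

lemma max_le_smithPickands {a u v : ℝ} (ha : 0 < a) (hu : 0 < u) (hv : 0 < v) :
    max u v ≤ smithPickands a u v :=
  max_le (le_smithPickands ha hu hv) (smithPickands_comm a u v ▸ le_smithPickands ha hv hu)

/-- The bivariate Smith Pickands dependence function satisfies the Pickands bounds
`max(w₁,w₂) ≤ A(w₁,w₂) ≤ 1` on the interior of the simplex, and `A(1,0) = A(0,1) = 1`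
in the limiting sense. -/
theorem smith_pickands_bounds (a : ℝ) (ha : 0 < a) :
    (∀ w₁ ∈ Set.Ioo (0:ℝ) 1,
      max w₁ (1 - w₁) ≤ smithPickands a w₁ (1 - w₁) ∧ smithPickands a w₁ (1 - w₁) ≤ 1) ∧
    Tendsto (fun w₁ => smithPickands a w₁ (1 - w₁)) (nhdsWithin 0 (Set.Ioi 0)) (nhds 1) ∧
    Tendsto (fun w₁ => smithPickands a w₁ (1 - w₁)) (nhdsWithin 1 (Set.Iio 1)) (nhds 1) := by
  have bounds : ∀ w ∈ Ioo (0:ℝ) 1,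
      max w (1 - w) ≤ smithPickands a w (1 - w) ∧ smithPickands a w (1 - w) ≤ 1 :=
    fun w hw => ⟨max_le_smithPickands ha hw.1 (sub_pos.2 hw.2),
      (smithPickands_le_add a hw.1.le (sub_pos.2 hw.2).le).trans_eq (add_sub_cancel w 1)⟩
  have squeeze : ∀ (x : ℝ) (s : Set ℝ), Ioo 0 1 ∈ 𝓝[s] x → max x (1 - x) = 1 →
      Tendsto (fun w => smithPickands a w (1 - w)) (𝓝[s] x) (𝓝 1) := by
    intro x s hmem hmax
    have hlim : Tendsto (fun w : ℝ => max w (1 - w)) (𝓝[s] x) (𝓝 1) :=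
      ((continuous_id.max (continuous_const.sub continuous_id)).tendsto' x 1 hmax).mono_left
        nhdsWithin_le_nhds
    exact tendsto_of_tendsto_of_tendsto_of_le_of_le' hlim tendsto_const_nhds
      (mem_of_superset hmem fun w hw => (bounds w hw).1)
      (mem_of_superset hmem fun w hw => (bounds w hw).2)
  exact ⟨bounds, squeeze 0 _ (Ioo_mem_nhdsGT one_pos) (by norm_num),
    squeeze 1 _ (Ioo_mem_nhdsLT one_pos) (by norm_num)⟩
end

section
/- Let Λ_B = -b·A_{θ_0}(w_B)²·∫₀¹ ℂ(u^{w_B}) u^{-1} du, where ℂ is a stochastic process with E{ℂ(u)·𝕎} = Ċ_{θ_0}(u) for all u ∈ [0,1]^d, for some random vector 𝕎 ∈ ℝ^p. Assume the dominated-convergence hypothesis (A3) holds (locally uniform integrable bounds on Ċ_θ(u^w)/u) and that θ ↦ Ċ_θ is continuous, and that ∫₀¹ C_θ(u^{w_B}) u^{-1} du = 1/A_θ(w_B) for all θ in a neighborhood of θ_0. Then E(Λ_B·𝕎) = b·∇A_{θ_0}(w_B) = ∇ξ_{B,θ_0}, where ∇ denotes the gradient with respect to θ and ξ_{B,θ}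 = b·A_θ(w_B). -/
/-!
Differentiating the identity `∫₀¹ C_θ(u^{w_B}) u⁻¹ du = 1/A_θ(w_B)` along the coordinate line
`θ₀ + t eᵢ`, with differentiation under the integral sign justified by the domination (A3), gives
`A_{θ₀}(w_B)² ∫₀¹ ∂ᵢC_{θ₀}(u^{w_B}) u⁻¹ du = -∂ᵢA_{θ₀}(w_B)`. Exchanging expectation and
`du`-integral and inserting `E{ℂ(u)𝕎} = Ċ_{θ₀}(u)` turns this into the claim.
If `A_{θ₀}(w_B) = 0` (so that `1/A` is read as `0`), the mean value theorem and (A3) still keep the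
integrals, hence `1/A_θ(w_B)`, bounded near `θ₀`; a function vanishing at `θ₀` with bounded
reciprocal has zero derivative there, so both sides vanish.
-/

open MeasureTheory

/-- The continuous linear map `v ↦ Σᵢ gᵢ vᵢ` associated with a gradient vector `g`. -/
noncomputable def gradCLM {p : ℕ} (v : Fin p → ℝ) : (Fin p → ℝ) →L[ℝ] ℝ :=
  ∑ i, v i • ContinuousLinearMap.proj i

open Filter Metric Set Topology

theorem gradCLM_apply_single {p : ℕ} (v : Fin p → ℝ) (i : Fin p) :
    gradCLM v (Pi.single i 1) = v i := by
  simp [gradCLM, Pi.single_apply]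

theorem HasFDerivAt.hasDerivAt_comp_add_smul {E F : Type*} [NormedAddCommGroup E]
    [NormedSpace ℝ E] [NormedAddCommGroup F] [NormedSpace ℝ F] {g : E → F} {g' : E →L[ℝ] F}
    {θ v : E} {t : ℝ} (hg : HasFDerivAt g g' (θ + t • v)) :
    HasDerivAt (fun s : ℝ => g (θ + s • v)) (g' v) t := by
  have hline : HasDerivAt (fun s : ℝ => θ + s • v) v t := by
    simpa using ((hasDerivAt_id t).smul_const v).const_add θ
  exact hg.comp_hasDerivAt t hline

theorem HasDerivAt.eq_zero_of_eventually_norm_inv_le {a : ℝ → ℝ} {a' x M : ℝ}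
    (ha : HasDerivAt a a' x) (hx : a x = 0) (hbdd : ∀ᶠ t in 𝓝 x, ‖(a t)⁻¹‖ ≤ M) : a' = 0 := by
  by_contra ha'
  have hblowup : Tendsto (fun t => ‖a t‖⁻¹) (𝓝[≠] x) atTop :=
    (tendsto_norm_nhdsNE_zero.comp (hx ▸ ha.tendsto_nhdsNE ha')).inv_tendsto_nhdsGT_zero
  obtain ⟨t, hlt, hle⟩ :=
    ((hblowup.eventually_gt_atTop M).and (nhdsWithin_le_nhds hbdd)).exists
  rw [norm_inv] at hle
  exact hlt.not_ge hle

section ParametricIntegral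

variable {α E : Type*} [MeasurableSpace α] {μ : Measure α} [NormedAddCommGroup E]
  [NormedSpace ℝ E]

theorem aestronglyMeasurable_of_hasDerivAt {f : ℝ → α → E} {f' : α → E} {t₀ : ℝ}
    (hf : ∀ᶠ t in 𝓝 t₀, AEStronglyMeasurable (f t) μ)
    (hderiv : ∀ᵐ x ∂μ, HasDerivAt (f · x) (f' x) t₀) : AEStronglyMeasurable f' μ := by
  classical
  -- Only the slopes at parameters where `f t` is measurable are usable; the others are set to `0`.
  let slopes : ℝ → α → E := fun t x =>
    if AEStronglyMeasurable (f t) μ then (t - t₀)⁻¹ • (f t x - f t₀ x) else 0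
  refine aestronglyMeasurable_of_tendsto_ae (𝓝[≠] t₀) (f := slopes) (fun t => ?_) ?_
  · by_cases ht : AEStronglyMeasurable (f t) μ
    · simp only [slopes, if_pos ht]
      exact (ht.sub hf.self_of_nhds).const_smul _
    · simp only [slopes, if_neg ht]
      exact aestronglyMeasurable_const
  · filter_upwards [hderiv] with x hx
    refine (hasDerivAt_iff_tendsto_slope.1 hx).congr' ?_
    filter_upwards [nhdsWithin_le_nhds hf] with t ht
    simp [slopes, ht, slope_def_module]

variable {f f' : ℝ → α → E} {bound : α → ℝ} {t₀ ε : ℝ}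

theorem norm_integral_sub_integral_le
    (hf : ∀ᵐ x ∂μ, ∀ t ∈ ball t₀ ε, HasDerivAt (f · x) (f' t x) t)
    (hf' : ∀ᵐ x ∂μ, ∀ t ∈ ball t₀ ε, ‖f' t x‖ ≤ bound x) (hbound : Integrable bound μ)
    {s t : ℝ} (hs : s ∈ ball t₀ ε) (ht : t ∈ ball t₀ ε)
    (hfs : Integrable (f s) μ) (hft : Integrable (f t) μ) :
    ‖∫ x, f t x ∂μ - ∫ x, f s x ∂μ‖ ≤ (∫ x, bound x ∂μ) * |t - s| := by
  rw [← integral_sub hft hfs, ← integral_mul_const]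
  refine norm_integral_le_of_norm_le (hbound.mul_const _) ?_
  filter_upwards [hf, hf'] with x hx hx'
  simpa only [Real.norm_eq_abs] using (convex_ball t₀ ε).norm_image_sub_le_of_norm_hasDerivWithin_le
    (fun r hr => (hx r hr).hasDerivWithinAt) hx' hs ht

theorem exists_forall_norm_integral_le
    (hf : ∀ᵐ x ∂μ, ∀ t ∈ ball t₀ ε, HasDerivAt (f · x) (f' t x) t)
    (hf' : ∀ᵐ x ∂μ, ∀ t ∈ ball t₀ ε, ‖f' t x‖ ≤ bound x) (hbound : Integrable bound μ) :
    ∃ C, ∀ t ∈ ball t₀ ε, ‖∫ x, f t x ∂μ‖ ≤ C := by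
  by_cases hint : ∃ s ∈ ball t₀ ε, Integrable (f s) μ
  · obtain ⟨s, hs, hfs⟩ := hint
    have hε : 0 ≤ ε := (pos_of_mem_ball hs).le
    have hbound_nonneg : 0 ≤ ∫ x, bound x ∂μ :=
      integral_nonneg_of_ae (hf'.mono fun x hx => (norm_nonneg _).trans (hx s hs))
    refine ⟨‖∫ x, f s x ∂μ‖ + (∫ x, bound x ∂μ) * (2 * ε), fun t ht => ?_⟩
    by_cases hft : Integrable (f t) μ
    · have hts : |t - s| ≤ 2 * ε := by
        have := dist_triangle_right t s t₀
        rw [mem_ball] at hs ht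
        rw [← Real.dist_eq]; linarith
      calc ‖∫ x, f t x ∂μ‖ ≤ ‖∫ x, f s x ∂μ‖ + ‖∫ x, f t x ∂μ - ∫ x, f s x ∂μ‖ :=
            norm_le_insert' _ _
        _ ≤ _ := by
          gcongr
          exact (norm_integral_sub_integral_le hf hf' hbound hs ht hfs hft).trans
            (by gcongr)
    · rw [integral_undef hft, norm_zero]
      positivity
  · simp only [not_exists, not_and] at hint
    exact ⟨0, fun t ht => by rw [integral_undef (hint t ht), norm_zero]⟩

end ParametricIntegral

theorem sq_mul_integral_eq_neg_of_integral_eq_inv {α : Type*} [MeasurableSpace α]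
    {μ : Measure α} {f f' : ℝ → α → ℝ} {bound : α → ℝ} {a : ℝ → ℝ} {a' t₀ ε : ℝ}
    (hε : 0 < ε) (hf : ∀ᵐ x ∂μ, ∀ t ∈ ball t₀ ε, HasDerivAt (f · x) (f' t x) t)
    (hf' : ∀ᵐ x ∂μ, ∀ t ∈ ball t₀ ε, ‖f' t x‖ ≤ bound x) (hbound : Integrable bound μ)
    (hint : ∀ t ∈ ball t₀ ε, ∫ x, f t x ∂μ = (a t)⁻¹) (ha : HasDerivAt a a' t₀) :
    a t₀ ^ 2 * ∫ x, f' t₀ x ∂μ = -a' := by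
  by_cases ha₀ : a t₀ = 0
  · obtain ⟨C, hC⟩ := exists_forall_norm_integral_le hf hf' hbound
    have hbdd : ∀ᶠ t in 𝓝 t₀, ‖(a t)⁻¹‖ ≤ C := by
      filter_upwards [ball_mem_nhds t₀ hε] with t ht
      rw [← hint t ht]
      exact hC t ht
    simp [ha₀, ha.eq_zero_of_eventually_norm_inv_le ha₀ hbdd]
  have hf_int : ∀ᶠ t in 𝓝 t₀, Integrable (f t) μ := by
    filter_upwards [ball_mem_nhds t₀ hε, ha.continuousAt.eventually_ne ha₀] with t ht hat
    exact Integrable.of_integral_ne_zero (by rw [hint t ht]; exact inv_ne_zero hat)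
  have hf_meas : ∀ᶠ t in 𝓝 t₀, AEStronglyMeasurable (f t) μ :=
    hf_int.mono fun _ h => h.aestronglyMeasurable
  have hf'_meas : AEStronglyMeasurable (f' t₀) μ :=
    aestronglyMeasurable_of_hasDerivAt hf_meas (hf.mono fun x hx => hx t₀ (mem_ball_self hε))
  have hderiv_integral := (hasDerivAt_integral_of_dominated_loc_of_deriv_le
    (ball_mem_nhds t₀ hε) hf_meas hf_int.self_of_nhds hf'_meas hf' hbound hf).2
  have hderiv_inv : HasDerivAt (fun t => ∫ x, f t x ∂μ) (-a' / a t₀ ^ 2) t₀ :=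
    (ha.inv ha₀).congr_of_eventuallyEq
      (eventually_of_mem (ball_mem_nhds t₀ hε) hint)
  rw [hderiv_integral.unique hderiv_inv]
  field_simp

theorem expectation_lambda_W_general {Ω : Type*} [MeasurableSpace Ω] (μ : Measure Ω)
    (p d : ℕ)
    (Cfam : (Fin p → ℝ) → (Fin d → ℝ) → ℝ)
    (Cdot : (Fin p → ℝ) → (Fin d → ℝ) → Fin p → ℝ)
    (Afam : (Fin p → ℝ) → ℝ) (gradA : Fin p → ℝ)
    (θ0 : Fin p → ℝ) (b : ℕ)
    (wB : Fin d → ℝ) (hwB0 : ∀ j, 0 ≤ wB j)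
    (CC : Ω → (Fin d → ℝ) → ℝ) (W : Ω → Fin p → ℝ)
    -- `E{ℂ(u)·𝕎} = Ċ_{θ₀}(u)` for all `u ∈ [0,1]^d`
    (hEW : ∀ u : Fin d → ℝ, (∀ j, u j ∈ Set.Icc (0:ℝ) 1) → ∀ i,
      ∫ ω, CC ω u * W ω i ∂μ = Cdot θ0 u i)
    (N : Set (Fin p → ℝ)) (hN : N ∈ nhds θ0)
    -- `Ċ_ϑ(u)` is the gradient in `θ` of `C_θ(u)` on a neighborhood of `θ₀`
    (hderiv : ∀ ϑ ∈ N, ∀ u : Fin d → ℝ, (∀ j, u j ∈ Set.Icc (0:ℝ) 1) →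
      HasFDerivAt (fun θ => Cfam θ u) (gradCLM (Cdot ϑ u)) ϑ)
    -- condition (A3): locally uniform integrable domination
    (hA3 : ∃ h g : ℝ → ℝ, IntegrableOn h (Set.Ioo 0 1) ∧ IntegrableOn g (Set.Ioo 0 1) ∧
      ∀ u ∈ Set.Ioo (0:ℝ) 1, ∀ ϑ ∈ N, ∀ i,
        |Cdot ϑ (fun j => u ^ wB j) i / u| ≤ h u ∧
        |Cdot ϑ (fun j => u ^ wB j) i / (u * Real.log u)| ≤ g u)
    -- the identity `∫₀¹ C_θ(u^{w_B}) u⁻¹ du = 1/A_θ(w_B)` near `θ₀`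
    (hident : ∀ ϑ ∈ N,
      ∫ u in Set.Ioo (0:ℝ) 1, Cfam ϑ (fun j => u ^ wB j) / u = 1 / Afam ϑ)
    (hAdiff : HasFDerivAt Afam (gradCLM gradA) θ0)
    -- Fubini-type interchange of expectation and the integral over `u`
    (hswap : ∀ i, ∫ ω, (∫ u in Set.Ioo (0:ℝ) 1, CC ω (fun j => u ^ wB j) / u) * W ω i ∂μ
      = ∫ u in Set.Ioo (0:ℝ) 1, (∫ ω, CC ω (fun j => u ^ wB j) * W ω i ∂μ) / u) :
    ∀ i, ∫ ω, (-(b : ℝ) * (Afam θ0) ^ 2 *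
        ∫ u in Set.Ioo (0:ℝ) 1, CC ω (fun j => u ^ wB j) / u) * W ω i ∂μ
      = (b : ℝ) * gradA i := by
  intro i
  obtain ⟨h, _, hh, -, hbound⟩ := hA3
  set e : Fin p → ℝ := Pi.single i 1
  have hpow : ∀ u ∈ Ioo (0:ℝ) 1, ∀ j, u ^ wB j ∈ Icc (0:ℝ) 1 := fun u hu j =>
    ⟨Real.rpow_nonneg hu.1.le _, Real.rpow_le_one hu.1.le hu.2.le (hwB0 j)⟩
  have hline : Tendsto (fun t : ℝ => θ0 + t • e) (𝓝 0) (𝓝 θ0) := by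
    have hcont : Continuous fun t : ℝ => θ0 + t • e := by fun_prop
    simpa using hcont.tendsto 0
  obtain ⟨ε, hε, hball⟩ := Metric.mem_nhds_iff.1 (hline hN)
  have hA : HasDerivAt (fun t : ℝ => Afam (θ0 + t • e)) (gradA i) 0 := by
    rw [← gradCLM_apply_single gradA i]
    exact HasFDerivAt.hasDerivAt_comp_add_smul (by simpa using hAdiff)
  have hdiff_identity := sq_mul_integral_eq_neg_of_integral_eq_inv (μ := volume.restrict (Ioo 0 1))
    (f := fun t u => Cfam (θ0 + t • e) (fun j => u ^ wB j) / u)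
    (f' := fun t u => Cdot (θ0 + t • e) (fun j => u ^ wB j) i / u)
    (a := fun t => Afam (θ0 + t • e)) hε
    (by
      filter_upwards [ae_restrict_mem measurableSet_Ioo] with u hu t ht
      have hC := (hderiv _ (hball ht) _ (hpow u hu)).hasDerivAt_comp_add_smul
      rw [gradCLM_apply_single] at hC
      exact hC.div_const u)
    (by
      filter_upwards [ae_restrict_mem measurableSet_Ioo] with u hu t ht
      exact (hbound u hu _ (hball ht) i).1)
    hh (fun t ht => by rw [hident _ (hball ht), one_div])
    hA
  simp only [zero_smul, add_zero] at hdiff_identity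
  calc ∫ ω, (-(b : ℝ) * Afam θ0 ^ 2 *
        ∫ u in Ioo (0:ℝ) 1, CC ω (fun j => u ^ wB j) / u) * W ω i ∂μ
      = -(b : ℝ) * Afam θ0 ^ 2 *
        ∫ ω, (∫ u in Ioo (0:ℝ) 1, CC ω (fun j => u ^ wB j) / u) * W ω i ∂μ := by
        rw [← integral_const_mul]; simp only [mul_assoc]
    _ = -(b : ℝ) * Afam θ0 ^ 2 * ∫ u in Ioo (0:ℝ) 1, Cdot θ0 (fun j => u ^ wB j) i / u := by
        rw [hswap i, setIntegral_congr_fun measurableSet_Ioo fun u hu => by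
          rw [hEW _ (hpow u hu) i]]
    _ = (b : ℝ) * gradA i := by linear_combination (-(b : ℝ)) * hdiff_identity

/-- Final step in the proof of Proposition 2: with
`Λ_B = -b·A_{θ₀}(w_B)²·∫₀¹ ℂ(u^{w_B}) u⁻¹ du`, `E{ℂ(u)𝕎} = Ċ_{θ₀}(u)`, the
domination condition (A3), continuity of `ϑ ↦ Ċ_ϑ`, and the identity
`∫₀¹ C_θ(u^{w_B}) u⁻¹ du = 1/A_θ(w_B)` near `θ₀`, one has
`E(Λ_B·𝕎) = b·∇A_{θ₀}(w_B) = ∇ξ_{B,θ₀}`. -/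
theorem expectation_lambda_W {Ω : Type*} [MeasurableSpace Ω] (μ : Measure Ω)
    [IsProbabilityMeasure μ] (p d : ℕ)
    (Cfam : (Fin p → ℝ) → (Fin d → ℝ) → ℝ)
    (Cdot : (Fin p → ℝ) → (Fin d → ℝ) → Fin p → ℝ)
    (Afam : (Fin p → ℝ) → ℝ) (gradA : Fin p → ℝ)
    (θ0 : Fin p → ℝ) (b : ℕ) (hb : 2 ≤ b)
    (wB : Fin d → ℝ) (hwB0 : ∀ j, 0 ≤ wB j) (hwB1 : ∑ j, wB j = 1)
    (CC : Ω → (Fin d → ℝ) → ℝ) (W : Ω → Fin p → ℝ)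
    -- `E{ℂ(u)·𝕎} = Ċ_{θ₀}(u)` for all `u ∈ [0,1]^d`
    (hEW : ∀ u : Fin d → ℝ, (∀ j, u j ∈ Set.Icc (0:ℝ) 1) → ∀ i,
      ∫ ω, CC ω u * W ω i ∂μ = Cdot θ0 u i)
    (N : Set (Fin p → ℝ)) (hN : N ∈ nhds θ0)
    -- `Ċ_ϑ(u)` is the gradient in `θ` of `C_θ(u)` on a neighborhood of `θ₀`
    (hderiv : ∀ ϑ ∈ N, ∀ u : Fin d → ℝ, (∀ j, u j ∈ Set.Icc (0:ℝ) 1) →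
      HasFDerivAt (fun θ => Cfam θ u) (gradCLM (Cdot ϑ u)) ϑ)
    -- continuity of `ϑ ↦ Ċ_ϑ`
    (hcont : ∀ u : Fin d → ℝ, (∀ j, u j ∈ Set.Icc (0:ℝ) 1) →
      Continuous fun ϑ => Cdot ϑ u)
    -- condition (A3): locally uniform integrable domination
    (hA3 : ∃ h g : ℝ → ℝ, IntegrableOn h (Set.Ioo 0 1) ∧ IntegrableOn g (Set.Ioo 0 1) ∧
      ∀ u ∈ Set.Ioo (0:ℝ) 1, ∀ ϑ ∈ N, ∀ i,
        |Cdot ϑ (fun j => u ^ wB j) i / u| ≤ h u ∧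
        |Cdot ϑ (fun j => u ^ wB j) i / (u * Real.log u)| ≤ g u)
    -- the identity `∫₀¹ C_θ(u^{w_B}) u⁻¹ du = 1/A_θ(w_B)` near `θ₀`
    (hident : ∀ ϑ ∈ N,
      ∫ u in Set.Ioo (0:ℝ) 1, Cfam ϑ (fun j => u ^ wB j) / u = 1 / Afam ϑ)
    (hAdiff : HasFDerivAt Afam (gradCLM gradA) θ0)
    -- Fubini-type interchange of expectation and the integral over `u`
    (hswap : ∀ i, ∫ ω, (∫ u in Set.Ioo (0:ℝ) 1, CC ω (fun j => u ^ wB j) / u) * W ω i ∂μ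
      = ∫ u in Set.Ioo (0:ℝ) 1, (∫ ω, CC ω (fun j => u ^ wB j) * W ω i ∂μ) / u) :
    ∀ i, ∫ ω, (-(b : ℝ) * (Afam θ0) ^ 2 *
        ∫ u in Set.Ioo (0:ℝ) 1, CC ω (fun j => u ^ wB j) / u) * W ω i ∂μ
      = (b : ℝ) * gradA i :=
  expectation_lambda_W_general μ p d Cfam Cdot Afam gradA θ0 b wB hwB0 CC W hEW N hN hderiv hA3
    hident hAdiff hswap
end
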